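/- arXiv:1403.1004 — 2 statements merged into one kernel-verified Lean document; each statement's English description precedes it below -/
import Mathlib

section
/- For the second-order combined perturbation variable Ĥ := g₂ + 2£_{−X₁} g₁ + £_{−X₁}² g, where g₁, g₂ are tensor fields transforming as g₁^Y − g₁^X = £_{ξ₁} g and g₂^Y − g₂^X = 2£_{ξ₁} g₁^X + (£_{ξ₁}² + £_{ξ₂}) g, and X₁ transforms as X₁^Y − X₁^X = ξ₁, the variable Ĥ transforms as Ĥ^Y − Ĥ^X = £_{σ₂} g with σ₂ = ξ₂ + [ξ₁, X₁^X]. -/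
attribute [local instance 100] LieRing.ofAssociativeRing

/-!
Substituting `X₁^Y = ξ₁ + X₁^X`, `g₁^Y = £_{ξ₁} g + g₁^X` and the law for `g₂`, the terms in
`£_{ξ₁} g₁^X` and `£_{ξ₁}² g` cancel, and of the mixed second-order terms only
`£_{ξ₁} £_{X₁} g − £_{X₁} £_{ξ₁} g` survives; it is `£_{[ξ₁, X₁]} g` because `£` is a Lie algebra
morphism.
-/

namespace LieHom

variable {R V T : Type*} [CommRing R] [LieRing V] [LieAlgebra R V] [AddCommGroup T] [Module R T]
  (L : V →ₗ⁅R⁆ Module.End R T)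

theorem map_lie_apply (x y : V) (t : T) : L ⁅x, y⁆ t = L x (L y t) - L y (L x t) := by
  rw [L.map_lie, Ring.lie_def]
  rfl

theorem map_neg_add_apply_map_add_sub (x y : V) (s t : T) :
    L (-(x + y)) (L x t + s) - L (-y) s = -(L x s + L x (L x t) + L y (L x t)) := by
  simp only [map_neg, map_add, LinearMap.neg_apply, LinearMap.add_apply]
  abel

theorem map_neg_add_apply_map_neg_add_sub (x y : V) (t : T) :
    L (-(x + y)) (L (-(x + y)) t) - L (-y) (L (-y) t)
      = L x (L x t) + L x (L y t) + L y (L x t) := by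
  simp only [map_neg, map_add, LinearMap.neg_apply, LinearMap.add_apply]
  abel

end LieHom

/-- Second-order combined perturbation variable: with `L : V →ₗ⁅ℝ⁆ Module.End ℝ T` the
Lie derivative (a Lie algebra morphism, so `L⁅u,v⁆ = L u ∘ L v − L v ∘ L u`), suppose
`g₁, g₂` transform as `g₁^Y − g₁^X = £_{ξ₁} g` and
`g₂^Y − g₂^X = 2£_{ξ₁} g₁^X + (£_{ξ₁}² + £_{ξ₂}) g`, and `X₁^Y − X₁^X = ξ₁`.
Then `Ĥ := g₂ + 2£_{−X₁} g₁ + £_{−X₁}² g` transforms as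
`Ĥ^Y − Ĥ^X = £_{σ₂} g` with `σ₂ = ξ₂ + [ξ₁, X₁^X]`. -/
theorem second_order_hatH_gauge_transformation
    {V T : Type*} [LieRing V] [LieAlgebra ℝ V] [AddCommGroup T] [Module ℝ T]
    (L : V →ₗ⁅ℝ⁆ Module.End ℝ T)
    (g g1X g1Y g2X g2Y : T) (ξ₁ ξ₂ X1X X1Y : V)
    (h1 : g1Y - g1X = L ξ₁ g)
    (h2 : g2Y - g2X = 2 • L ξ₁ g1X + (L ξ₁ (L ξ₁ g) + L ξ₂ g))
    (hX : X1Y - X1X = ξ₁) :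
    (g2Y + 2 • L (-X1Y) g1Y + L (-X1Y) (L (-X1Y) g))
        - (g2X + 2 • L (-X1X) g1X + L (-X1X) (L (-X1X) g))
      = L (ξ₂ + ⁅ξ₁, X1X⁆) g := by
  obtain rfl : X1Y = ξ₁ + X1X := sub_eq_iff_eq_add.mp hX
  obtain rfl : g1Y = L ξ₁ g + g1X := sub_eq_iff_eq_add.mp h1
  calc _ = (g2Y - g2X) + 2 • (L (-(ξ₁ + X1X)) (L ξ₁ g + g1X) - L (-X1X) g1X)
          + (L (-(ξ₁ + X1X)) (L (-(ξ₁ + X1X)) g) - L (-X1X) (L (-X1X) g)) := by abel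
    _ = L ξ₂ g + (L ξ₁ (L X1X g) - L X1X (L ξ₁ g)) := by
        rw [h2, L.map_neg_add_apply_map_add_sub, L.map_neg_add_apply_map_neg_add_sub]
        module
    _ = L (ξ₂ + ⁅ξ₁, X1X⁆) g := by rw [map_add, LinearMap.add_apply, L.map_lie_apply]
end

section
/- The second-order gauge-invariant matter perturbation Q₂^{inv} := Q₂ + 2£_{−X₁}Q₁ + (£_{−X₂} + £_{−X₁}²)Q₀ is gauge-invariant, given the transformation rules Q₂^Y − Q₂^X = 2£_{ξ₁}Q₁^X + (£_{ξ₁}² + £_{ξ₂})Q₀, Q₁^Y − Q₁^X = £_{ξ₁}Q₀, X₁^Y − X₁^X = ξ₁, and X₂^Y − X₂^X = ξ₂ + [ξ₁, X₁^X]. -/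
/-!
Write `£` for the Lie derivative `L`. Under the gauge change, `-2 £_{X₁} Q₁` produces
`-2 £_{ξ₁} Q₁ - 2 £_{X₁} £_{ξ₁} Q₀ - 2 £_{ξ₁}² Q₀`, which cancels the `2 £_{ξ₁} Q₁` of `Q₂` and,
together with `£_{X₁ + ξ₁}² Q₀`, leaves the non-symmetric term `£_{ξ₁} £_{X₁} Q₀ - £_{X₁} £_{ξ₁} Q₀`.
Since `L` is a Lie algebra morphism this is `£_{[ξ₁, X₁]} Q₀`, which is exactly what the
commutator in the transformation rule of `X₂` removes.
-/

attribute [local instance] LieRing.ofAssociativeRing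

section GaugeInvariant

variable {R V T : Type*} [CommRing R] [LieRing V] [LieAlgebra R V] [AddCommGroup T] [Module R T]
  (L : V →ₗ⁅R⁆ Module.End R T)

theorem LieHom.map_lie_apply_s15 (u v : V) (t : T) : L ⁅u, v⁆ t = L u (L v t) - L v (L u t) := by
  rw [LieHom.map_lie, Ring.lie_def]; rfl

def secondOrderInvariant (Q0 Q1 Q2 : T) (X1 X2 : V) : T :=
  Q2 + 2 • L (-X1) Q1 + (L (-X2) Q0 + L (-X1) (L (-X1) Q0))

theorem secondOrderInvariant_eq (Q0 Q1 Q2 : T) (X1 X2 : V) :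
    secondOrderInvariant L Q0 Q1 Q2 X1 X2 = Q2 - 2 • L X1 Q1 + L X1 (L X1 Q0) - L X2 Q0 := by
  simp only [secondOrderInvariant, map_neg, LinearMap.neg_apply, neg_neg, smul_neg]
  abel

theorem secondOrderInvariant_gauge_change (Q0 Q1 Q2 : T) (ξ₁ ξ₂ X1 X2 : V) :
    secondOrderInvariant L Q0 (Q1 + L ξ₁ Q0) (Q2 + (2 • L ξ₁ Q1 + (L ξ₁ (L ξ₁ Q0) + L ξ₂ Q0)))
        (X1 + ξ₁) (X2 + (ξ₂ + ⁅ξ₁, X1⁆)) =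
      secondOrderInvariant L Q0 Q1 Q2 X1 X2 := by
  simp only [secondOrderInvariant_eq, map_add, LinearMap.add_apply, L.map_lie_apply_s15, two_smul]
  abel

end GaugeInvariant

/-- Second-order gauge-invariant matter perturbation: with `L : V →ₗ⁅ℝ⁆ Module.End ℝ T`
the Lie derivative (so `L⁅u,v⁆ = L u ∘ L v − L v ∘ L u`), given the transformation rules
`Q₂^Y − Q₂^X = 2£_{ξ₁}Q₁^X + (£_{ξ₁}² + £_{ξ₂})Q₀`, `Q₁^Y − Q₁^X = £_{ξ₁}Q₀`,
`X₁^Y − X₁^X = ξ₁`, and `X₂^Y − X₂^X = ξ₂ + [ξ₁, X₁^X]`, the quantity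
`Q₂^{inv} := Q₂ + 2£_{−X₁}Q₁ + (£_{−X₂} + £_{−X₁}²)Q₀` is gauge-invariant. -/
theorem second_order_matter_gauge_invariant
    {V T : Type*} [LieRing V] [LieAlgebra ℝ V] [AddCommGroup T] [Module ℝ T]
    (L : V →ₗ⁅ℝ⁆ Module.End ℝ T)
    (Q0 Q1X Q1Y Q2X Q2Y : T) (ξ₁ ξ₂ X1X X1Y X2X X2Y : V)
    (hQ2 : Q2Y - Q2X = 2 • L ξ₁ Q1X + (L ξ₁ (L ξ₁ Q0) + L ξ₂ Q0))
    (hQ1 : Q1Y - Q1X = L ξ₁ Q0)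
    (hX1 : X1Y - X1X = ξ₁)
    (hX2 : X2Y - X2X = ξ₂ + ⁅ξ₁, X1X⁆) :
    Q2Y + 2 • L (-X1Y) Q1Y + (L (-X2Y) Q0 + L (-X1Y) (L (-X1Y) Q0))
      = Q2X + 2 • L (-X1X) Q1X + (L (-X2X) Q0 + L (-X1X) (L (-X1X) Q0)) := by
  obtain rfl := eq_add_of_sub_eq' hQ2
  obtain rfl := eq_add_of_sub_eq' hQ1
  obtain rfl := eq_add_of_sub_eq' hX1
  obtain rfl := eq_add_of_sub_eq' hX2
  exact secondOrderInvariant_gauge_change L Q0 Q1X Q2X ξ₁ ξ₂ X1X X2X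
end
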